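/- arXiv:1501.07460 — 2 statements merged into one kernel-verified Lean document; each statement's English description precedes it below -/
import Mathlib

section
/- Let G be a connected multigraph. If G contains no pair of adjacent edges whose removal leaves a connected spanning subgraph, then no two distinct cycles of G have a vertex in common. -/
/-- Two edges of a multigraph (given by its endpoint map `ends`) form a pair of
adjacent edges: they are distinct and share an endpoint. -/
def AdjPair {V E : Type} (ends : E → Sym2 V) (e f : E) : Prop :=
  e ≠ f ∧ ∃ x, x ∈ ends e ∧ x ∈ ends f

/-- Reachability between vertices using only edges in `S`. -/
def reachOn {V E : Type} (ends : E → Sym2 V) (S : Set E) (a b : V) : Prop :=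
  Relation.ReflTransGen (fun x y => ∃ e ∈ S, ends e = s(x, y)) a b

/-- The spanning subgraph with edge set `S` is connected (all vertices mutually reachable). -/
def ConnOn {V E : Type} (ends : E → Sym2 V) (S : Set E) : Prop :=
  ∀ a b : V, reachOn ends S a b

/-- The edges of `S` remaining after deleting all edges occurring in the pair set `P`. -/
def PairsRemoved {E : Type} (S : Set E) (P : Finset (E × E)) : Set E :=
  {x ∈ S | ∀ p ∈ P, x ≠ p.1 ∧ x ≠ p.2}

/-- `P` is a set of pairwise disjoint pairs of adjacent edges of the (spanning) subgraph
with edge set `S` whose removal leaves a connected spanning subgraph. -/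
def ValidOn {V E : Type} (ends : E → Sym2 V) (S : Set E) (P : Finset (E × E)) : Prop :=
  (∀ p ∈ P, p.1 ∈ S ∧ p.2 ∈ S ∧ AdjPair ends p.1 p.2) ∧
  (∀ p ∈ P, ∀ q ∈ P, p ≠ q → p.1 ≠ q.1 ∧ p.1 ≠ q.2 ∧ p.2 ≠ q.1 ∧ p.2 ≠ q.2) ∧
  ConnOn ends (PairsRemoved S P)

/-- `m` of the subgraph with edge set `S`: the maximum number of pairwise disjoint pairs
of adjacent edges whose removal leaves a connected spanning subgraph. -/
noncomputable def maxPairsOn {V E : Type} (ends : E → Sym2 V) (S : Set E) : ℕ :=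
  sSup {k | ∃ P : Finset (E × E), ValidOn ends S P ∧ P.card = k}

/-- A cycle (closed walk with no repeated vertices or edges; length 1 = loop,
length 2 = pair of parallel edges) using only edges from `S`. -/
structure CycleIn {V E : Type} (ends : E → Sym2 V) (S : Set E) where
  n : ℕ
  npos : 0 < n
  v : ZMod n → V
  e : ZMod n → E
  vinj : Function.Injective v
  einj : Function.Injective e
  mem : ∀ i, e i ∈ S
  incid : ∀ i, ends (e i) = s(v i, v (i + 1))

/-- The number of connected components of the spanning subgraph with edge set `S`
containing an odd number of edges. -/
noncomputable def oddComp {V E : Type} (ends : E → Sym2 V) (S : Set E) : ℕ :=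
  Nat.card {c : Quot (reachOn ends S) //
    Odd (Nat.card {e : E // e ∈ S ∧ ∀ x ∈ ends e, Quot.mk (reachOn ends S) x = c})}
lemma reachOn_symm {V E : Type} (ends : E → Sym2 V) (S : Set E) {a b : V}
    (h : reachOn ends S a b) : reachOn ends S b a := by
  induction h with
  | refl => exact .refl
  | tail hab hbc ih =>
    refine .trans (.single ?_) ih
    obtain ⟨e, he, heq⟩ := hbc
    exact ⟨e, he, by rw [heq, Sym2.eq_swap]⟩

lemma cycle_detour {V E : Type} (ends : E → Sym2 V) (S : Set E)
    {S' : Set E} (c : CycleIn ends S') (hsub : ∀ i, c.e i ∈ S) (k : ZMod c.n) :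
    reachOn ends (S \ {c.e k}) (c.v (k+1)) (c.v k) := by
  have npos := c.npos
  have key : ∀ m : ℕ, m ≤ c.n - 1 →
      reachOn ends (S \ {c.e k}) (c.v (k+1)) (c.v (k+1+(m:ℕ))) := by
    intro m
    induction m with
    | zero => intro _; simp only [Nat.cast_zero, add_zero]; exact .refl
    | succ m ih =>
      intro hm
      refine (ih (le_trans (Nat.le_succ m) hm)).tail ?_
      refine ⟨c.e (k+1+(m:ℕ)), ⟨hsub _, ?_⟩, ?_⟩
      · intro hcontra
        have h1 : k + 1 + (m:ℕ) = k := c.einj hcontra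
        have h2 : ((m+1 : ℕ) : ZMod c.n) = 0 := by
          push_cast
          linear_combination h1
        haveI : NeZero c.n := NeZero.of_pos npos
        have h3 : c.n ∣ m + 1 := (ZMod.natCast_eq_zero_iff _ _).mp h2
        have h4 := Nat.le_of_dvd (Nat.succ_pos m) h3
        omega
      · rw [c.incid]
        congr 2
        push_cast
        ring
  have h := key (c.n - 1) le_rfl
  have hcast : (1 : ZMod c.n) + ((c.n - 1 : ℕ) : ZMod c.n) = 0 := by
    have : ((1 + (c.n - 1) : ℕ) : ZMod c.n) = ((c.n : ℕ) : ZMod c.n) := by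
      congr 1
      omega
    push_cast at this
    rw [ZMod.natCast_self] at this
    exact this
  have : c.v (k + 1 + ((c.n - 1 : ℕ) : ZMod c.n)) = c.v k := by
    congr 1
    rw [add_assoc, hcast, add_zero]
  rwa [this] at h

lemma conn_remove {V E : Type} (ends : E → Sym2 V) (S : Set E)
    {S' : Set E} (c : CycleIn ends S') (hsub : ∀ i, c.e i ∈ S) (k : ZMod c.n)
    (hS : ConnOn ends S) : ConnOn ends (S \ {c.e k}) := by
  intro a b
  have h := hS a b
  induction h with
  | refl => exact .refl
  | @tail p q hab step ih =>
    obtain ⟨x, hx, hxe⟩ := step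
    by_cases hxk : x = c.e k
    · subst hxk
      have h2 : s(p, q) = s(c.v k, c.v (k+1)) := by rw [← hxe, c.incid]
      rcases Sym2.eq_iff.mp h2 with ⟨h1, h2'⟩ | ⟨h1, h2'⟩
      · exact ih.trans (h1 ▸ h2' ▸ (reachOn_symm _ _ (cycle_detour ends S c hsub k)))
      · exact ih.trans (h1 ▸ h2' ▸ (cycle_detour ends S c hsub k))
    · exact ih.tail ⟨x, ⟨hx, hxk⟩, hxe⟩

lemma main_lemma {V E : Type} (ends : E → Sym2 V) (hG : ConnOn ends Set.univ)
    (hno : ∀ e f : E, AdjPair ends e f → ¬ ConnOn ends {x | x ≠ e ∧ x ≠ f})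
    (c c' : CycleIn ends Set.univ) (g : E) (hg : g ∈ Set.range c.e)
    (hg' : g ∉ Set.range c'.e) (i : ZMod c.n) (j : ZMod c'.n)
    (hv : c.v i = c'.v j) : False := by
  have hab : ∃ (a : ZMod c.n) (b : ZMod c'.n), c.v a = c'.v b ∧ c.e a ∉ Set.range c'.e := by
    by_cases hi : c.e i ∈ Set.range c'.e
    · obtain ⟨k, hk⟩ := hg
      have hQ : ∀ m : ℕ, c.e (i + (m:ℕ)) ∈ Set.range c'.e ∨
          ∃ a b, c.v a = c'.v b ∧ c.e a ∉ Set.range c'.e := by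
        intro m
        induction m with
        | zero => left; simpa using hi
        | succ m ih =>
          by_cases h : c.e (i + ((m+1 : ℕ) : ZMod c.n)) ∈ Set.range c'.e
          · left; exact h
          · right
            rcases ih with hin | hdone
            · obtain ⟨s, hs⟩ := hin
              have hmem : c.v (i + (m:ℕ) + 1) ∈ ends (c.e (i + (m:ℕ))) := by
                rw [c.incid]; exact Sym2.mem_mk_right _ _
              rw [← hs, c'.incid] at hmem
              have hidx : i + ((m+1 : ℕ) : ZMod c.n) = i + (m:ℕ) + 1 := by
                push_cast; ring
              rcases Sym2.mem_iff.mp hmem with h1 | h1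
              · exact ⟨i + ((m+1:ℕ) : ZMod c.n), s, by rw [hidx]; exact h1, h⟩
              · exact ⟨i + ((m+1:ℕ) : ZMod c.n), s + 1, by rw [hidx]; exact h1, h⟩
            · exact hdone
      haveI : NeZero c.n := NeZero.of_pos c.npos
      have := hQ (k - i).val
      rw [ZMod.natCast_val, ZMod.cast_id, add_sub_cancel, hk] at this
      exact this.resolve_left hg'
    · exact ⟨i, j, hv, hi⟩
  obtain ⟨a, b, hw, hnot⟩ := hab
  set e := c.e a with he
  set f := c'.e b with hf
  have hef : e ≠ f := fun h => hnot (h ▸ ⟨b, rfl⟩)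
  have adj : AdjPair ends e f := by
    refine ⟨hef, c.v a, ?_, ?_⟩
    · rw [he, c.incid]; exact Sym2.mem_mk_left _ _
    · rw [hf, c'.incid, hw]; exact Sym2.mem_mk_left _ _
  have conn1 : ConnOn ends (Set.univ \ {e}) :=
    conn_remove ends Set.univ c (fun _ => Set.mem_univ _) a hG
  have hsub' : ∀ i, c'.e i ∈ Set.univ \ {e} := by
    intro i'
    refine ⟨Set.mem_univ _, fun h => hnot ?_⟩
    simp only [Set.mem_singleton_iff] at h
    exact ⟨i', h⟩
  have conn2 : ConnOn ends ((Set.univ \ {e}) \ {f}) :=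
    conn_remove ends _ c' hsub' b conn1
  have hset : ((Set.univ \ {e}) \ {f} : Set E) = {x | x ≠ e ∧ x ≠ f} := by
    ext x; simp [and_comm]
  rw [hset] at conn2
  exact hno e f adj conn2

/-- if no pair of adjacent edges can be removed keeping the graph
connected, then no two distinct cycles of `G` share a vertex. -/
theorem cycles_disjoint_of_no_removable_pair {V E : Type} [Fintype V] [Fintype E]
    (ends : E → Sym2 V) (hG : ConnOn ends Set.univ)
    (hno : ∀ e f : E, AdjPair ends e f → ¬ ConnOn ends {x | x ≠ e ∧ x ≠ f}) :
    ∀ c c' : CycleIn ends Set.univ,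
      Set.range c.e ≠ Set.range c'.e → ∀ i j, c.v i ≠ c'.v j := by
  intro c c' hne i j hv
  by_cases hcase : ∃ g ∈ Set.range c.e, g ∉ Set.range c'.e
  · obtain ⟨g, hg, hg'⟩ := hcase
    exact main_lemma ends hG hno c c' g hg hg' i j hv
  · push_neg at hcase
    have hsub : Set.range c.e ⊆ Set.range c'.e := hcase
    have : ∃ g ∈ Set.range c'.e, g ∉ Set.range c.e := by
      by_contra h
      push_neg at h
      exact hne (le_antisymm hsub h)
    obtain ⟨g, hg, hg'⟩ := this
    exact main_lemma ends hG hno c' c g hg hg' j i hv.symm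
end

section
/- Let G be a connected multigraph and let P be any inclusion-wise maximal set of pairwise disjoint pairs of adjacent edges of G whose removal leaves a connected spanning subgraph. Then |P| ≥ m(G)/2, where m(G) is the maximum size over all such sets. -/
section Helpers
variable {V E : Type} (ends : E → Sym2 V)

lemma sym2_exists {z : Sym2 V} : ∃ a b, z = s(a, b) := by
  induction z using Sym2.ind with | _ x y => exact ⟨x, y, rfl⟩

lemma reach_mono {S T : Set E} (hST : S ⊆ T) {a b : V} (h : reachOn ends S a b) :
    reachOn ends T a b :=
  by
    unfold reachOn at *
    induction h with
    | refl => exact .refl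
    | tail _ hst ih =>
      obtain ⟨e, he, h2⟩ := hst
      exact ih.tail ⟨e, hST he, h2⟩

lemma connOn_mono {S T : Set E} (hST : S ⊆ T) (h : ConnOn ends S) : ConnOn ends T :=
  fun a b => reach_mono ends hST (h a b)

lemma reach_symm {S : Set E} : Symmetric (reachOn ends S) :=
  by
    intro a b h
    unfold reachOn at *
    induction h with
    | refl => exact .refl
    | tail _ hst ih =>
      obtain ⟨e, he, hq⟩ := hst
      exact Relation.ReflTransGen.head ⟨e, he, by rw [hq]; exact Sym2.eq_swap⟩ ih

lemma reach_equiv (S : Set E) : Equivalence (reachOn ends S) :=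
  ⟨fun _ => .refl, fun h => reach_symm ends h, fun h1 h2 => h1.trans h2⟩

lemma quot_mk_eq_iff {S : Set E} {x y : V} :
    Quot.mk (reachOn ends S) x = Quot.mk (reachOn ends S) y ↔ reachOn ends S x y := by
  rw [Quot.eq, (reach_equiv ends S).eqvGen_iff]

lemma reach_split {S : Set E} {e : E} {a b : V} (he : ends e = s(a, b)) {x y : V}
    (h : reachOn ends S x y) :
    reachOn ends (S \ {e}) x y ∨
      (reachOn ends (S \ {e}) x a ∧ reachOn ends (S \ {e}) b y) ∨
      (reachOn ends (S \ {e}) x b ∧ reachOn ends (S \ {e}) a y) := by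
  induction h with
  | refl => exact Or.inl .refl
  | @tail z y hxz hzy ih =>
    obtain ⟨f, hfS, hf⟩ := hzy
    by_cases hfe : f = e
    · subst hfe
      have hzy : s(z, y) = s(a, b) := hf.symm.trans he
      rcases Sym2.eq_iff.mp hzy with ⟨rfl, rfl⟩ | ⟨rfl, rfl⟩
      · rcases ih with h | ⟨h1, _⟩ | ⟨h1, _⟩
        · exact Or.inr (Or.inl ⟨h, .refl⟩)
        · exact Or.inr (Or.inl ⟨h1, .refl⟩)
        · exact Or.inl h1
      · rcases ih with h | ⟨h1, _⟩ | ⟨h1, _⟩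
        · exact Or.inr (Or.inr ⟨h, .refl⟩)
        · exact Or.inl h1
        · exact Or.inr (Or.inr ⟨h1, .refl⟩)
    · have hstep : reachOn ends (S \ {e}) z y := .single ⟨f, ⟨hfS, hfe⟩, hf⟩
      rcases ih with h | ⟨h1, h2⟩ | ⟨h1, h2⟩
      · exact Or.inl (h.trans hstep)
      · exact Or.inr (Or.inl ⟨h1, h2.trans hstep⟩)
      · exact Or.inr (Or.inr ⟨h1, h2.trans hstep⟩)

/-- number of connected components -/
noncomputable def ncomp (S : Set E) : ℕ := Nat.card (Quot (reachOn ends S))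

noncomputable def qmap {S T : Set E} (hST : S ⊆ T) :
    Quot (reachOn ends S) → Quot (reachOn ends T) :=
  Quot.lift (Quot.mk _) (fun _ _ h => Quot.sound (reach_mono ends hST h))

lemma qmap_surj {S T : Set E} (hST : S ⊆ T) : Function.Surjective (qmap ends hST) := by
  intro c
  obtain ⟨x, rfl⟩ := Quot.exists_rep c
  exact ⟨Quot.mk _ x, rfl⟩

lemma ncomp_anti [Finite V] {S T : Set E} (hST : S ⊆ T) : ncomp ends T ≤ ncomp ends S :=
  Nat.card_le_card_of_surjective _ (qmap_surj ends hST)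

lemma qmap_almost_inj {S : Set E} {e : E} {a b : V} (he : ends e = s(a, b))
    {u v : Quot (reachOn ends (S \ {e}))}
    (h : qmap ends (Set.diff_subset) u = qmap ends (Set.diff_subset) v) :
    u = v ∨ (u = Quot.mk _ a ∧ v = Quot.mk _ b) ∨ (u = Quot.mk _ b ∧ v = Quot.mk _ a) := by
  induction u using Quot.ind with | _ x =>
  induction v using Quot.ind with | _ y =>
  have hxy : reachOn ends S x y := (quot_mk_eq_iff ends).mp h
  rcases reach_split ends he hxy with h | ⟨h1, h2⟩ | ⟨h1, h2⟩
  · exact Or.inl (Quot.sound h)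
  · exact Or.inr (Or.inl ⟨Quot.sound h1, (Quot.sound h2).symm⟩)
  · exact Or.inr (Or.inr ⟨Quot.sound h1, (Quot.sound h2).symm⟩)

lemma ncomp_diff_le [Finite V] (S : Set E) (e : E) :
    ncomp ends (S \ {e}) ≤ ncomp ends S + 1 := by
  classical
  obtain ⟨a, b, he⟩ : ∃ a b, ends e = s(a, b) := sym2_exists
  set g := qmap ends (Set.diff_subset (s := S) (t := {e}))
  let h : Quot (reachOn ends (S \ {e})) → Option (Quot (reachOn ends S)) :=
    fun u => if u = Quot.mk _ b then none else some (g u)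
  have hfin : Fintype (Quot (reachOn ends S)) := Fintype.ofFinite _
  have hinj : Function.Injective h := by
    intro u v huv
    by_cases hu : u = Quot.mk _ b <;> by_cases hv : v = Quot.mk _ b
    · exact hu.trans hv.symm
    · exact absurd huv (by simp only [h, if_pos hu, if_neg hv]; simp)
    · exact absurd huv (by simp only [h, if_pos hv, if_neg hu]; simp)
    · simp only [h, if_neg hu, if_neg hv, Option.some.injEq] at huv
      rcases qmap_almost_inj ends he huv with h' | ⟨h1, h2⟩ | ⟨h1, h2⟩
      · exact h'
      · exact absurd h2 hv
      · exact absurd h1 hu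
  calc ncomp ends (S \ {e}) ≤ Nat.card (Option (Quot (reachOn ends S))) :=
        Nat.card_le_card_of_injective h hinj
    _ = ncomp ends S + 1 := by
        simp [Nat.card_eq_fintype_card, ncomp]

lemma ncomp_bridge [Finite V] {S : Set E} {e : E} {a b : V} (heS : e ∈ S)
    (he : ends e = s(a, b)) (hbr : ¬ reachOn ends (S \ {e}) a b) :
    ncomp ends S + 1 ≤ ncomp ends (S \ {e}) := by
  classical
  set g := qmap ends (Set.diff_subset (s := S) (t := {e})) with hg
  have hsurj : Function.Surjective g := qmap_surj ends _
  set s := Function.surjInv hsurj with hs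
  set A' : Quot (reachOn ends (S \ {e})) := Quot.mk _ a with hA
  set B' : Quot (reachOn ends (S \ {e})) := Quot.mk _ b with hB
  have hAB : A' ≠ B' := fun h => hbr ((quot_mk_eq_iff ends).mp h)
  have hgAB : g A' = g B' := Quot.sound (.single ⟨e, heS, he⟩)
  set w : Quot (reachOn ends (S \ {e})) := if s (g A') = A' then B' else A' with hw
  have hwrange : ∀ c, s c ≠ w := by
    intro c hc
    have h1 : g (s c) = c := Function.surjInv_eq hsurj c
    have h2 : g w = g A' := by
      by_cases hcase : s (g A') = A'
      · rw [hw, if_pos hcase]; exact hgAB.symm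
      · rw [hw, if_neg hcase]
    have hc2 : c = g A' := by rw [← h1, hc, h2]
    by_cases hcase : s (g A') = A'
    · rw [hw, if_pos hcase] at hc
      rw [hc2] at hc
      exact hAB (hcase.symm.trans hc)
    · rw [hw, if_neg hcase] at hc
      rw [hc2] at hc
      exact hcase hc
  let h : Option (Quot (reachOn ends S)) → Quot (reachOn ends (S \ {e})) :=
    fun o => o.elim w s
  have hinj : Function.Injective h := by
    intro o1 o2 h12
    match o1, o2 with
    | none, none => rfl
    | none, some c => exact absurd h12.symm (hwrange c)
    | some c, none => exact absurd h12 (hwrange c)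
    | some c1, some c2 => exact congrArg some (Function.injective_surjInv hsurj h12)
  have hcard : Nat.card (Option (Quot (reachOn ends S))) ≤ ncomp ends (S \ {e}) :=
    Nat.card_le_card_of_injective h hinj
  calc ncomp ends S + 1 = Nat.card (Option (Quot (reachOn ends S))) := by
        have := Fintype.ofFinite (Quot (reachOn ends S))
        simp [ncomp, Nat.card_eq_fintype_card]
    _ ≤ ncomp ends (S \ {e}) := hcard

lemma ncomp_bridges [Finite V] (B : Finset E) :
    ∀ (S : Set E), (∀ e ∈ B, e ∈ S ∧ ∀ a b, ends e = s(a, b) → ¬ reachOn ends (S \ {e}) a b) →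
    ncomp ends S + B.card ≤ ncomp ends (S \ ↑B) := by
  classical
  induction B using Finset.induction_on with
  | empty => intro S _; simp
  | @insert e B' henew ih =>
    intro S hB
    have hset : S \ ↑(insert e B') = (S \ ↑B') \ {e} := by
      ext x
      simp only [Set.mem_diff, Finset.coe_insert, Set.mem_insert_iff, Finset.mem_coe,
        Set.mem_singleton_iff]
      tauto
    obtain ⟨heS, hbr⟩ := hB e (Finset.mem_insert_self e B')
    obtain ⟨a, b, he⟩ : ∃ a b, ends e = s(a, b) := sym2_exists
    have heS' : e ∈ S \ ↑B' := ⟨heS, by simpa using henew⟩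
    have hbr' : ¬ reachOn ends ((S \ ↑B') \ {e}) a b := fun hr =>
      hbr a b he (reach_mono ends (by intro x hx; exact ⟨hx.1.1, hx.2⟩) hr)
    have h1 := ncomp_bridge ends heS' he hbr'
    have h2 := ih S (fun f hf => hB f (Finset.mem_insert_of_mem hf))
    rw [hset, Finset.card_insert_of_notMem henew]
    omega

lemma ncomp_union_le [Finite V] (A : Finset E) (S : Set E) :
    ncomp ends S ≤ ncomp ends (S ∪ ↑A) + A.card := by
  classical
  induction A using Finset.induction_on with
  | empty => simp
  | @insert e A' henew ih =>
    have hsub : (S ∪ ↑(insert e A')) \ {e} ⊆ S ∪ ↑A' := by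
      intro x hx
      obtain ⟨hx1, hx2⟩ := hx
      simp only [Finset.coe_insert, Set.union_insert, Set.mem_insert_iff] at hx1
      rcases hx1 with rfl | hx1
      · exact absurd rfl hx2
      · exact hx1
    have h1 : ncomp ends (S ∪ ↑A') ≤ ncomp ends (S ∪ ↑(insert e A')) + 1 :=
      le_trans (ncomp_anti ends hsub) (ncomp_diff_le ends _ e)
    rw [Finset.card_insert_of_notMem henew]
    omega

lemma ncomp_eq_one [Finite V] [Nonempty V] {S : Set E} (h : ConnOn ends S) :
    ncomp ends S = 1 := by
  rw [ncomp, Nat.card_eq_one_iff_unique]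
  constructor
  · constructor
    intro u v
    induction u using Quot.ind with | _ x =>
    induction v using Quot.ind with | _ y =>
    exact Quot.sound (h x y)
  · exact ⟨Quot.mk _ Classical.ofNonempty⟩

lemma aug {V E : Type} [Fintype V] [Fintype E] [DecidableEq E] (ends : E → Sym2 V)
    (D1 D2 : Finset E) (h1 : ConnOn ends (↑D1 : Set E)ᶜ) (h2 : ConnOn ends (↑D2 : Set E)ᶜ)
    (hcard : D1.card < D2.card) :
    ∃ e ∈ D2, e ∉ D1 ∧ ConnOn ends (↑(insert e D1) : Set E)ᶜ := by
  classical
  have hne : (D2 \ D1).Nonempty := by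
    rw [Finset.sdiff_nonempty]
    intro hsub
    exact absurd (Finset.card_le_card hsub) (by omega)
  cases isEmpty_or_nonempty V with
  | inl hV =>
    obtain ⟨e, he⟩ := hne
    rw [Finset.mem_sdiff] at he
    exact ⟨e, he.1, he.2, fun a _ => isEmptyElim a⟩
  | inr hV =>
    by_contra hcon
    push_neg at hcon
    set S1 : Set E := (↑D1 : Set E)ᶜ with hS1
    have hbrs : ∀ e ∈ D2 \ D1, e ∈ S1 ∧ ∀ a b, ends e = s(a, b) →
        ¬ reachOn ends (S1 \ {e}) a b := by
      intro e he
      rw [Finset.mem_sdiff] at he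
      have heS : e ∈ S1 := by simp [hS1, he.2]
      refine ⟨heS, fun a b hab hr => ?_⟩
      have hset : S1 \ {e} = (↑(insert e D1) : Set E)ᶜ := by
        ext x
        simp only [hS1, Set.mem_diff, Set.mem_compl_iff, Finset.mem_coe,
          Finset.coe_insert, Set.mem_singleton_iff, Finset.mem_insert, Set.mem_insert_iff]
        tauto
      have hnc : ¬ ConnOn ends (S1 \ {e}) := by rw [hset]; exact hcon e he.1 he.2
      apply hnc
      intro x y
      rcases reach_split ends hab (h1 x y) with h | ⟨ha, hb⟩ | ⟨hb', ha'⟩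
      · exact h
      · exact ha.trans (hr.trans hb)
      · exact hb'.trans ((reach_symm ends hr).trans ha')
    have key := ncomp_bridges ends (D2 \ D1) S1 hbrs
    have e1 : ncomp ends S1 = 1 := ncomp_eq_one ends h1
    have hset2 : S1 \ ↑(D2 \ D1) = (↑(D1 ∪ D2) : Set E)ᶜ := by
      ext x
      simp only [hS1, Set.mem_diff, Set.mem_compl_iff, Finset.mem_coe, Finset.mem_sdiff,
        Finset.mem_union]
      tauto
    have key2 := ncomp_union_le ends (D1 \ D2) ((↑(D1 ∪ D2) : Set E)ᶜ)
    have hset3 : (↑(D1 ∪ D2) : Set E)ᶜ ∪ ↑(D1 \ D2) = (↑D2 : Set E)ᶜ := by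
      ext x
      simp only [Set.mem_union, Set.mem_compl_iff, Finset.mem_coe, Finset.mem_sdiff,
        Finset.mem_union]
      tauto
    rw [hset3] at key2
    have e2 : ncomp ends (↑D2 : Set E)ᶜ = 1 := ncomp_eq_one ends h2
    rw [hset2, e1] at key
    rw [e2] at key2
    have c1 : (D2 \ D1).card + (D2 ∩ D1).card = D2.card := Finset.card_sdiff_add_card_inter D2 D1
    have c2 : (D1 \ D2).card + (D1 ∩ D2).card = D1.card := Finset.card_sdiff_add_card_inter D1 D2
    have c3 : (D2 ∩ D1).card = (D1 ∩ D2).card := by rw [Finset.inter_comm]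
    omega

lemma aug_iter {V E : Type} [Fintype V] [Fintype E] [DecidableEq E] (ends : E → Sym2 V) :
    ∀ (n : ℕ) (D1 D2 : Finset E), ConnOn ends (↑D1 : Set E)ᶜ → ConnOn ends (↑D2 : Set E)ᶜ →
      D2.card - D1.card ≤ n →
      ∃ I : Finset E, D1 ⊆ I ∧ I ⊆ D1 ∪ D2 ∧ ConnOn ends (↑I : Set E)ᶜ ∧ D2.card ≤ I.card := by
  classical
  intro n
  induction n with
  | zero =>
    intro D1 D2 h1 _ h
    exact ⟨D1, subset_rfl, Finset.subset_union_left, h1, by omega⟩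
  | succ n ih =>
    intro D1 D2 h1 h2 h
    by_cases hc : D2.card ≤ D1.card
    · exact ⟨D1, subset_rfl, Finset.subset_union_left, h1, hc⟩
    · obtain ⟨e, he2, he1, hconn⟩ := aug ends D1 D2 h1 h2 (by omega)
      obtain ⟨I, hI1, hI2, hI3, hI4⟩ := ih (insert e D1) D2 hconn h2 (by
        rw [Finset.card_insert_of_notMem he1]; omega)
      refine ⟨I, (Finset.subset_insert e D1).trans hI1, ?_, hI3, hI4⟩
      refine hI2.trans ?_
      exact Finset.union_subset
        (Finset.insert_subset (Finset.mem_union_right _ he2) Finset.subset_union_left)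
        Finset.subset_union_right

end Helpers

/-- any inclusion-wise maximal valid set of disjoint pairs of adjacent
edges has size at least `m(G)/2`. -/
theorem maximal_pairset_ge_half {V E : Type} [Fintype V] [Fintype E]
    (ends : E → Sym2 V) (hG : ConnOn ends Set.univ) (P : Finset (E × E))
    (hP : ValidOn ends Set.univ P)
    (hmax : ∀ e f : E, e ∈ PairsRemoved Set.univ P → f ∈ PairsRemoved Set.univ P →
      AdjPair ends e f → ¬ ConnOn ends (PairsRemoved Set.univ P \ {e, f})) :
    maxPairsOn ends Set.univ ≤ 2 * P.card := by
  classical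
  refine csSup_le' ?_
  rintro k ⟨Q, hQ, rfl⟩
  by_contra hlt
  push_neg at hlt
  set DP : Finset E := P.image Prod.fst ∪ P.image Prod.snd with hDP
  set DQ : Finset E := Q.image Prod.fst ∪ Q.image Prod.snd with hDQ
  have hRem : ∀ R : Finset (E × E),
      PairsRemoved (Set.univ : Set E) R = (↑(R.image Prod.fst ∪ R.image Prod.snd) : Set E)ᶜ := by
    intro R
    ext x
    simp only [PairsRemoved, Set.mem_setOf_eq, Set.mem_univ, true_and, Set.mem_compl_iff,
      Finset.coe_union, Set.mem_union, Finset.mem_coe, Finset.mem_image, not_or,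
      not_exists, not_and]
    constructor
    · intro h
      exact ⟨fun p hp hpx => (h p hp).1 hpx.symm, fun p hp hpx => (h p hp).2 hpx.symm⟩
    · intro ⟨h1, h2⟩ p hp
      exact ⟨fun hx => h1 p hp hx.symm, fun hx => h2 p hp hx.symm⟩
  have hPRP : PairsRemoved (Set.univ : Set E) P = (↑DP : Set E)ᶜ := hRem P
  have hQRP : PairsRemoved (Set.univ : Set E) Q = (↑DQ : Set E)ᶜ := hRem Q
  have hconnP : ConnOn ends (↑DP : Set E)ᶜ := hPRP ▸ hP.2.2
  have hconnQ : ConnOn ends (↑DQ : Set E)ᶜ := hQRP ▸ hQ.2.2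
  have hDPcard : DP.card ≤ 2 * P.card := by
    have h2 := Finset.card_image_le (s := P) (f := Prod.fst)
    have h3 := Finset.card_image_le (s := P) (f := Prod.snd)
    calc DP.card ≤ (P.image Prod.fst).card + (P.image Prod.snd).card :=
          Finset.card_union_le _ _
      _ ≤ 2 * P.card := by omega
  have hDQcard : DQ.card = 2 * Q.card := by
    have hfst : (Q.image Prod.fst).card = Q.card := Finset.card_image_of_injOn (by
      intro p hp q hq hpq
      by_contra hne
      exact (hQ.2.1 p (Finset.mem_coe.mp hp) q (Finset.mem_coe.mp hq) hne).1 hpq)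
    have hsnd : (Q.image Prod.snd).card = Q.card := Finset.card_image_of_injOn (by
      intro p hp q hq hpq
      by_contra hne
      exact (hQ.2.1 p (Finset.mem_coe.mp hp) q (Finset.mem_coe.mp hq) hne).2.2.2 hpq)
    have hdisj : Disjoint (Q.image Prod.fst) (Q.image Prod.snd) := by
      rw [Finset.disjoint_left]
      intro x hx1 hx2
      obtain ⟨p, hp, hpx⟩ := Finset.mem_image.mp hx1
      obtain ⟨q, hq, hqx⟩ := Finset.mem_image.mp hx2
      by_cases hpq : p = q
      · subst hpq
        exact (hQ.1 p hp).2.2.1 (hpx.trans hqx.symm)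
      · exact (hQ.2.1 p hp q hq hpq).2.1 (hpx.trans hqx.symm)
    rw [hDQ, Finset.card_union_of_disjoint hdisj, hfst, hsnd]
    omega
  obtain ⟨I, hPI, hIPQ, hconnI, hcardI⟩ :=
    aug_iter ends DQ.card DP DQ hconnP hconnQ (by omega)
  set Bad := Q.filter (fun q => q.1 ∈ DP ∨ q.2 ∈ DP ∨ q.1 ∉ I ∨ q.2 ∉ I) with hBad
  set φ : E × E → E := fun q =>
    if q.1 ∈ DP then q.1 else if q.2 ∈ DP then q.2 else if q.1 ∉ I then q.1 else q.2 with hφ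
  have hφmem : ∀ q, φ q = q.1 ∨ φ q = q.2 := by
    intro q
    simp only [hφ]
    split_ifs <;> simp
  have hmemDQ : ∀ q ∈ Q, q.1 ∈ DQ ∧ q.2 ∈ DQ := by
    intro q hq
    exact ⟨Finset.mem_union_left _ (Finset.mem_image_of_mem Prod.fst hq),
      Finset.mem_union_right _ (Finset.mem_image_of_mem Prod.snd hq)⟩
  have hcardBad : Bad.card ≤ ((DP ∩ DQ) ∪ (DQ \ I)).card := by
    apply Finset.card_le_card_of_injOn φ
    · intro q hq
      rw [hBad, Finset.mem_coe, Finset.mem_filter] at hq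
      obtain ⟨hqQ, hcond⟩ := hq
      obtain ⟨hq1, hq2⟩ := hmemDQ q hqQ
      by_cases h1 : q.1 ∈ DP
      · simp only [hφ]
        simp only [if_pos h1]
        exact Finset.mem_union_left _ (Finset.mem_inter.mpr ⟨h1, hq1⟩)
      · by_cases h2 : q.2 ∈ DP
        · simp only [hφ]
          simp only [if_neg h1, if_pos h2]
          exact Finset.mem_union_left _ (Finset.mem_inter.mpr ⟨h2, hq2⟩)
        · by_cases h3 : q.1 ∉ I
          · simp only [hφ]
            simp only [if_neg h1, if_neg h2, if_pos h3]
            exact Finset.mem_union_right _ (Finset.mem_sdiff.mpr ⟨hq1, h3⟩)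
          · have h4 : q.2 ∉ I := by tauto
            rw [hφ]
            simp only [if_neg h1, if_neg h2, if_neg h3]
            exact Finset.mem_union_right _ (Finset.mem_sdiff.mpr ⟨hq2, h4⟩)
    · intro q hq q' hq' heq
      by_contra hne
      have hqQ : q ∈ Q := Finset.mem_of_mem_filter _ (Finset.mem_coe.mp hq)
      have hq'Q : q' ∈ Q := Finset.mem_of_mem_filter _ (Finset.mem_coe.mp hq')
      have h4 := hQ.2.1 q hqQ q' hq'Q hne
      rcases hφmem q with h | h <;> rcases hφmem q' with h' | h' <;>
        rw [h, h'] at heq <;> tauto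
  have hIDQ : (DQ \ I).card ≤ (DP \ DQ).card := by
    have a1 := Finset.card_sdiff_add_card_inter DQ I
    have a2 := Finset.card_sdiff_add_card_inter I DQ
    have a3 : (I \ DQ).card ≤ (DP \ DQ).card := Finset.card_le_card (by
      intro x hx
      rw [Finset.mem_sdiff] at hx ⊢
      exact ⟨(Finset.mem_union.mp (hIPQ hx.1)).resolve_right hx.2, hx.2⟩)
    have a4 : (I ∩ DQ).card = (DQ ∩ I).card := by rw [Finset.inter_comm]
    omega
  have hsplitDP := Finset.card_inter_add_card_sdiff DP DQ
  have hUnionLe := Finset.card_union_le (DP ∩ DQ) (DQ \ I)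
  have hBQ : Bad ⊆ Q := by
    rw [hBad]; exact Finset.filter_subset _ _
  have hgood : (Q \ Bad).Nonempty := by
    rw [← Finset.card_pos, Finset.card_sdiff_of_subset hBQ]
    omega
  obtain ⟨q, hq⟩ := hgood
  rw [Finset.mem_sdiff] at hq
  obtain ⟨hqQ, hqBad⟩ := hq
  have hnc : ¬(q.1 ∈ DP ∨ q.2 ∈ DP ∨ q.1 ∉ I ∨ q.2 ∉ I) := fun hc =>
    hqBad (Finset.mem_filter.mpr ⟨hqQ, hc⟩)
  push_neg at hnc
  obtain ⟨h1, h2, h3, h4⟩ := hnc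
  have hadj := (hQ.1 q hqQ).2.2
  have hm1 : q.1 ∈ PairsRemoved Set.univ P := by
    rw [hPRP]
    simpa using h1
  have hm2 : q.2 ∈ PairsRemoved Set.univ P := by
    rw [hPRP]
    simpa using h2
  refine hmax q.1 q.2 hm1 hm2 hadj ?_
  rw [hPRP]
  refine connOn_mono ends ?_ hconnI
  intro x hx
  simp only [Set.mem_compl_iff, Finset.mem_coe] at hx
  refine ⟨by simpa using fun hxDP => hx (hPI hxDP), ?_⟩
  intro hxq
  rcases hxq with rfl | hxq
  · exact hx h3
  · rw [Set.mem_singleton_iff] at hxq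
    subst hxq
    exact hx h4
end
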